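/- Let G_1,...,G_n be i.i.d. geometric with P(G_i=k)=q^k(1-q), 0<q<1, and let π = Γ_n(G) be the induced random permutation (indices ordered by G_i descending, ties broken by smaller index first). Fix k ≤ n, indices i_1 < i_2 < ... < i_k in [n], and a pattern σ ∈ S_k. Then the probability that the values π^{-1}(i_1), ..., π^{-1}(i_k) are order-isomorphic to σ^{-1} equals q^{maj(σ)} / [k]_q!. -/

import Mathlib

open MeasureTheory ProbabilityTheory

/-- The major index of a word `w` of length `N`. -/
def wmaj {N : ℕ} {α : Type*} [LinearOrder α] (w : Fin N → α) : ℕ :=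
  ∑ i ∈ Finset.range (N - 1),
    if h : i + 1 < N then
      (if w ⟨i + 1, h⟩ < w ⟨i, Nat.lt_of_succ_lt h⟩ then i + 1 else 0)
    else 0

/-- The major index of a permutation. -/
def maj {n : ℕ} (π : Equiv.Perm (Fin n)) : ℕ := wmaj (fun i => π i)

/-- The `q`-integer `[m]_q = 1 + q + ⋯ + q^{m-1}`. -/
def qint (q : ℝ) (m : ℕ) : ℝ := ∑ j ∈ Finset.range m, q ^ j

/-- The `q`-factorial `[n]_q! = ∏_{i=1}^n [i]_q`. -/
def qfact (q : ℝ) (n : ℕ) : ℝ := ∏ i ∈ Finset.range n, qint q (i + 1)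

/-- For `π = Γₙ(G)` the permutation produced by the Maj sampler (indices ordered by
`G` descending, ties broken by smaller index first), `invGamma G j` is the 0-indexed
position `π⁻¹(j)` of the index `j`, i.e. the number of indices `j'` that come
strictly before `j` in the ordering. -/
def invGamma {n : ℕ} (G : Fin n → ℕ) (j : Fin n) : ℕ :=
  (Finset.univ.filter (fun j' : Fin n =>
    G j < G j' ∨ (G j' = G j ∧ j' < j))).card


/-!
Put `y p = G (ι (σ p))`. By definition of `Γₙ`, the event says that `p ↦ (-y p, σ p)` is
lexicographically increasing, i.e. `y` is weakly decreasing and drops strictly exactly at the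
descents of `σ`. These `y` are exactly the tail sums `y p = ∑_{j ≥ p} (t j + d j)` with `t ∈ ℕ^k`
arbitrary and `d` the descent indicator of `σ`, and then `∑ p, y p = maj σ + ∑ j, (j + 1) t j`.
Summing the product of the geometric weights over `t` gives
`q^{maj σ} (1 - q)^k ∏_{j < k} (1 - q^{j+1})⁻¹ = q^{maj σ} / [k]_q!`.
-/

open Finset

section TailSum

variable {m : ℕ}

def tailSum (s : Fin (m + 1) → ℕ) (p : Fin (m + 1)) : ℕ := ∑ j ∈ Ici p, s j

lemma tailSum_castSucc (s : Fin (m + 1) → ℕ) (i : Fin m) :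
    tailSum s i.castSucc = s i.castSucc + tailSum s i.succ := by
  have : Ioi i.castSucc = Ici i.succ := by
    ext j; simp [Fin.lt_def, Fin.le_def]
  rw [tailSum, Ici_eq_cons_Ioi, sum_cons, this, tailSum]

lemma tailSum_last (s : Fin (m + 1) → ℕ) : tailSum s (Fin.last m) = s (Fin.last m) := by
  rw [tailSum, show Ici (Fin.last m) = {Fin.last m} by ext; simp [Fin.last_le_iff],
    sum_singleton]

lemma sum_tailSum (s : Fin (m + 1) → ℕ) :
    ∑ p, tailSum s p = ∑ j : Fin (m + 1), ((j : ℕ) + 1) * s j := by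
  simp only [tailSum]
  rw [sum_comm' (t' := univ) (s' := Iic) (by simp)]
  simp [Fin.card_Iic]

lemma tailSum_injective : Function.Injective (tailSum (m := m)) := by
  intro s s' h
  funext p
  induction p using Fin.lastCases with
  | last => simpa [tailSum_last] using congrFun h (Fin.last m)
  | cast i =>
    have h1 := congrFun h i.castSucc
    have h2 := congrFun h i.succ
    rw [tailSum_castSucc, tailSum_castSucc] at h1
    omega

lemma range_tailSum_add (d : Fin (m + 1) → ℕ) :
    Set.range (fun t => tailSum (t + d)) =
      {y | d (Fin.last m) ≤ y (Fin.last m) ∧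
        ∀ i : Fin m, y i.succ + d i.castSucc ≤ y i.castSucc} := by
  ext y
  constructor
  · rintro ⟨t, rfl⟩
    refine ⟨by simp [tailSum_last], fun i => ?_⟩
    simp only [tailSum_castSucc, Pi.add_apply]
    omega
  · rintro ⟨hlast, hstep⟩
    let t : Fin (m + 1) → ℕ := Fin.lastCases (motive := fun _ => ℕ)
      (y (Fin.last m) - d (Fin.last m)) fun i => y i.castSucc - y i.succ - d i.castSucc
    refine ⟨t, funext fun p => ?_⟩
    induction p using Fin.reverseInduction with
    | last => simp [tailSum_last, t]; omega
    | cast i ih =>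
      have := hstep i
      simp only [tailSum_castSucc, ih, Pi.add_apply, t, Fin.lastCases_castSucc]
      omega

end TailSum

def lexKey {α β : Type*} (y : α → ℕ) (c : α → β) (a : α) : ℕᵒᵈ ×ₗ β :=
  toLex (OrderDual.toDual (y a), c a)

lemma lexKey_lt_lexKey {α β : Type*} [Preorder β] (y : α → ℕ) (c : α → β) (a b : α) :
    lexKey y c a < lexKey y c b ↔ y b < y a ∨ (y a = y b ∧ c a < c b) := by
  simp [lexKey, Prod.Lex.toLex_lt_toLex]

lemma card_filter_lt_lt_card_filter_lt_iff {α β : Type*} [Fintype α] [LinearOrder β]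
    (f : α → β) (x y : α) : #{z | f z < f x} < #{z | f z < f y} ↔ f x < f y := by
  constructor
  · refine fun h => not_le.1 fun hyx => h.not_ge (card_le_card fun z => ?_)
    simpa using fun hz => hz.trans_le hyx
  · refine fun hxy => card_lt_card ⟨fun z => ?_, fun hsub => ?_⟩
    · simpa using fun hz => hz.trans hxy
    · simpa using hsub (show x ∈ _ by simpa using hxy)

lemma invGamma_eq_card {n : ℕ} (g : Fin n → ℕ) (x : Fin n) :
    invGamma g x = #{z | lexKey g id z < lexKey g id x} := by
  simp only [invGamma, lexKey_lt_lexKey, id]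

lemma invGamma_lt_invGamma_iff {n : ℕ} (g : Fin n → ℕ) (x y : Fin n) :
    invGamma g x < invGamma g y ↔ lexKey g id x < lexKey g id y := by
  rw [invGamma_eq_card, invGamma_eq_card, card_filter_lt_lt_card_filter_lt_iff]

lemma pattern_iff_strictMono {n k : ℕ} (g : Fin n → ℕ) {ι : Fin k → Fin n} (hι : StrictMono ι)
    (σ : Equiv.Perm (Fin k)) :
    (∀ a b, σ⁻¹ a < σ⁻¹ b ↔ invGamma g (ι a) < invGamma g (ι b)) ↔
      StrictMono (lexKey (fun p => g (ι (σ p))) σ) := by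
  have hkey : ∀ p r, lexKey g id (ι (σ p)) < lexKey g id (ι (σ r)) ↔
      lexKey (fun p => g (ι (σ p))) σ p < lexKey (fun p => g (ι (σ p))) σ r := by
    simp [lexKey_lt_lexKey, hι.lt_iff_lt]
  simp only [invGamma_lt_invGamma_iff]
  constructor
  · exact fun h p r hpr => (hkey p r).1 ((h (σ p) (σ r)).1 (by simpa using hpr))
  · intro h a b
    simpa using (h.lt_iff_lt (a := σ⁻¹ a) (b := σ⁻¹ b)).symm.trans (hkey _ _).symm

lemma lt_or_eq_and_lt_iff_add_ite_le {β : Type*} [LinearOrder β] {a b : β} (hab : a ≠ b)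
    (u v : ℕ) : v < u ∨ (u = v ∧ a < b) ↔ v + (if b < a then 1 else 0) ≤ u := by
  rcases hab.lt_or_gt with h | h
  · simp only [h, h.not_gt, if_false, and_true]; omega
  · simp only [h, h.not_gt, if_true, and_false, or_false]; omega

section Descents

variable {m : ℕ} (σ : Equiv.Perm (Fin (m + 1)))

def descentInd : Fin (m + 1) → ℕ :=
  Fin.lastCases (motive := fun _ => ℕ) 0 fun i => if σ i.succ < σ i.castSucc then 1 else 0

lemma sum_mul_descentInd : ∑ j : Fin (m + 1), ((j : ℕ) + 1) * descentInd σ j = maj σ := by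
  rw [Fin.sum_univ_castSucc, maj, wmaj, Nat.add_sub_cancel, ← Fin.sum_univ_eq_sum_range]
  simp only [descentInd, Fin.lastCases_last, Fin.lastCases_castSucc, mul_zero, add_zero]
  refine sum_congr rfl fun i _ => ?_
  simp only [mul_ite, mul_one, mul_zero, dif_pos (Nat.succ_lt_succ i.isLt)]
  rfl

lemma strictMono_lexKey_iff (y : Fin (m + 1) → ℕ) :
    StrictMono (lexKey y σ) ↔ y ∈ Set.range (fun t => tailSum (t + descentInd σ)) := by
  rw [Fin.strictMono_iff_lt_succ, range_tailSum_add]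
  simp only [descentInd, Fin.lastCases_last, Fin.lastCases_castSucc, zero_le, true_and,
    Set.mem_ofPred_eq, lexKey_lt_lexKey]
  exact forall_congr' fun i =>
    lt_or_eq_and_lt_iff_add_ite_le (σ.injective.ne Fin.castSucc_lt_succ.ne) _ _

end Descents

open scoped ENNReal

theorem ENNReal.tsum_pi_prod {β : Type*} :
    ∀ {k : ℕ} (g : Fin k → β → ℝ≥0∞), ∑' t : Fin k → β, ∏ p, g p (t p) = ∏ p, ∑' b, g p b
  | 0, g => by simp
  | k + 1, g => by
    rw [← (Fin.consEquiv fun _ => β).tsum_eq, ENNReal.tsum_prod', Fin.prod_univ_succ]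
    simp only [Fin.consEquiv_apply, Fin.prod_univ_succ, Fin.cons_zero, Fin.cons_succ,
      ENNReal.tsum_mul_left, ENNReal.tsum_pi_prod, ENNReal.tsum_mul_right]

theorem ProbabilityTheory.iIndepFun.measure_mem_range {Ω ι β T : Type*} [MeasurableSpace Ω]
    {μ : Measure Ω} [Fintype ι] [MeasurableSpace β] [MeasurableSingletonClass β] [Countable T]
    {X : ι → Ω → β} (hX : iIndepFun X μ) (hmeas : ∀ i, Measurable (X i))
    {Φ : T → ι → β} (hΦ : Φ.Injective) :
    μ {ω | (fun i => X i ω) ∈ Set.range Φ} = ∑' t, ∏ i, μ {ω | X i ω = Φ t i} := by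
  have hfiber : ∀ t, {ω | (fun i => X i ω) = Φ t} = ⋂ i, X i ⁻¹' {Φ t i} := by
    intro t; ext ω; simp [funext_iff]
  have hunion : {ω | (fun i => X i ω) ∈ Set.range Φ} = ⋃ t, {ω | (fun i => X i ω) = Φ t} := by
    ext ω; simp [eq_comm]
  rw [hunion, measure_iUnion]
  · refine tsum_congr fun t => ?_
    rw [hfiber, hX.meas_iInter fun i => ⟨{Φ t i}, measurableSet_singleton _, rfl⟩]
    rfl
  · intro t t' htt'
    exact Set.disjoint_left.2 fun ω h h' => htt' (hΦ (h.symm.trans h'))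
  · intro t
    rw [hfiber]
    exact MeasurableSet.iInter fun i => hmeas i (measurableSet_singleton _)

lemma prod_pow_tailSum_add {M : Type*} [CommMonoid M] {m : ℕ} (a : M) (t d : Fin (m + 1) → ℕ) :
    ∏ p, a ^ tailSum (t + d) p =
      a ^ (∑ j : Fin (m + 1), ((j : ℕ) + 1) * d j) *
        ∏ j : Fin (m + 1), (a ^ ((j : ℕ) + 1)) ^ t j := by
  simp only [prod_pow_eq_pow_sum, sum_tailSum, ← pow_mul, ← pow_add, ← sum_add_distrib,
    Pi.add_apply]
  exact congrArg (a ^ ·) (sum_congr rfl fun j _ => by ring)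

lemma qfact_mul_one_sub_pow (q : ℝ) (k : ℕ) :
    qfact q k * (1 - q) ^ k = ∏ i ∈ range k, (1 - q ^ (i + 1)) := by
  rw [qfact, ← card_range k, ← prod_const, card_range, ← prod_mul_distrib]
  exact prod_congr rfl fun i _ => by rw [qint, mul_comm, mul_neg_geom_sum]

lemma ENNReal.tsum_ofReal_pow {r : ℝ} (hr0 : 0 ≤ r) (hr1 : r < 1) :
    ∑' n, ENNReal.ofReal r ^ n = ENNReal.ofReal (1 - r)⁻¹ := by
  rw [ENNReal.tsum_geometric, ← ENNReal.ofReal_one, ← ENNReal.ofReal_sub _ hr0,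
    ENNReal.ofReal_inv_of_pos (by linarith)]

lemma div_qfact_eq {q : ℝ} (hq : q ≠ 1) (c : ℝ) (k : ℕ) :
    c / qfact q k = c * (1 - q) ^ k * ∏ i ∈ range k, (1 - q ^ (i + 1))⁻¹ := by
  have : (1 - q) ^ k ≠ 0 := pow_ne_zero _ (sub_ne_zero.2 hq.symm)
  rw [prod_inv_distrib, ← qfact_mul_one_sub_pow, mul_inv, div_eq_mul_inv]
  field_simp

lemma toReal_tsum_prod_geometric_tailSum {q : ℝ} (hq0 : 0 ≤ q) (hq1 : q < 1) {m : ℕ}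
    (d : Fin (m + 1) → ℕ) :
    (∑' t : Fin (m + 1) → ℕ,
        ∏ p, ENNReal.ofReal q ^ tailSum (t + d) p * ENNReal.ofReal (1 - q)).toReal =
      q ^ (∑ j : Fin (m + 1), ((j : ℕ) + 1) * d j) / qfact q (m + 1) := by
  simp only [prod_mul_distrib, prod_const, card_univ, Fintype.card_fin, prod_pow_tailSum_add,
    ENNReal.tsum_mul_right, ENNReal.tsum_mul_left]
  rw [ENNReal.tsum_pi_prod fun (j : Fin (m + 1)) n => (ENNReal.ofReal q ^ ((j : ℕ) + 1)) ^ n]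
  have hpos : ∀ j : ℕ, 0 ≤ (1 - q ^ (j + 1))⁻¹ := fun j =>
    inv_nonneg.2 (sub_nonneg.2 (pow_le_one₀ hq0 hq1.le))
  simp only [← ENNReal.ofReal_pow hq0, ENNReal.tsum_ofReal_pow (pow_nonneg hq0 _)
    (pow_lt_one₀ hq0 hq1 (Nat.add_one_ne_zero _)), ENNReal.toReal_mul, ENNReal.toReal_prod,
    ENNReal.toReal_pow, ENNReal.toReal_ofReal (hpos _), ENNReal.toReal_ofReal (pow_nonneg hq0 _),
    ENNReal.toReal_ofReal (sub_nonneg.2 hq1.le)]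
  rw [div_qfact_eq hq1.ne, Fin.prod_univ_eq_prod_range (fun j => (1 - q ^ (j + 1))⁻¹)]
  ring

theorem pattern_prob_general {Ω : Type*} [MeasurableSpace Ω] (μ : Measure Ω)
    [IsProbabilityMeasure μ] (q : ℝ) (hq0 : 0 < q) (hq1 : q < 1)
    (n : ℕ) (G : Fin n → Ω → ℕ) (hmeas : ∀ i, Measurable (G i))
    (hindep : iIndepFun G μ)
    (hgeom : ∀ i, ∀ m : ℕ, (μ {ω | G i ω = m}).toReal = q ^ m * (1 - q))
    (k : ℕ) (ι : Fin k → Fin n) (hι : StrictMono ι)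
    (σ : Equiv.Perm (Fin k)) :
    (μ {ω | ∀ a b : Fin k,
        σ⁻¹ a < σ⁻¹ b ↔ invGamma (fun i => G i ω) (ι a) < invGamma (fun i => G i ω) (ι b)}).toReal
      = q ^ maj σ / qfact q k := by
  rcases k with _ | m
  · simp [maj, wmaj, qfact]
  have hpoint : ∀ i j, μ {ω | G i ω = j} = ENNReal.ofReal q ^ j * ENNReal.ofReal (1 - q) := by
    intro i j
    rw [← ENNReal.ofReal_toReal (measure_ne_top μ _), hgeom, ENNReal.ofReal_mul (by positivity),
      ENNReal.ofReal_pow hq0.le]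
  have hevent : {ω | ∀ a b : Fin (m + 1),
      σ⁻¹ a < σ⁻¹ b ↔ invGamma (fun i => G i ω) (ι a) < invGamma (fun i => G i ω) (ι b)} =
      {ω | (fun p => G (ι (σ p)) ω) ∈ Set.range fun t => tailSum (t + descentInd σ)} := by
    ext ω
    exact (pattern_iff_strictMono _ hι σ).trans (strictMono_lexKey_iff σ _)
  have hX : iIndepFun (fun p => G (ι (σ p))) μ := hindep.precomp (hι.injective.comp σ.injective)
  have hΦ : Function.Injective fun t => tailSum (t + descentInd σ) :=
    tailSum_injective.comp (add_left_injective _)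
  rw [hevent, hX.measure_mem_range (fun _ => hmeas _) hΦ, ← sum_mul_descentInd σ,
    ← toReal_tsum_prod_geometric_tailSum hq0.le hq1]
  simp only [hpoint]

/-- For i.i.d. geometric `G₁, …, Gₙ`, indices `i₁ < ⋯ < i_k` (given by a strictly
monotone `ι : Fin k → Fin n`) and a pattern `σ ∈ S_k`, the probability that the
values `π⁻¹(i₁), …, π⁻¹(i_k)` of `π = Γₙ(G)` are order-isomorphic to `σ⁻¹` equals
`q^{maj σ} / [k]_q!`. -/
theorem pattern_prob {Ω : Type*} [MeasurableSpace Ω] (μ : Measure Ω)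
    [IsProbabilityMeasure μ] (q : ℝ) (hq0 : 0 < q) (hq1 : q < 1)
    (n : ℕ) (hn : 1 ≤ n) (G : Fin n → Ω → ℕ) (hmeas : ∀ i, Measurable (G i))
    (hindep : iIndepFun G μ)
    (hgeom : ∀ i, ∀ m : ℕ, (μ {ω | G i ω = m}).toReal = q ^ m * (1 - q))
    (k : ℕ) (hk : k ≤ n) (ι : Fin k → Fin n) (hι : StrictMono ι)
    (σ : Equiv.Perm (Fin k)) :
    (μ {ω | ∀ a b : Fin k,
        σ⁻¹ a < σ⁻¹ b ↔ invGamma (fun i => G i ω) (ι a) < invGamma (fun i => G i ω) (ι b)}).toReal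
      = q ^ maj σ / qfact q k :=
  pattern_prob_general μ q hq0 hq1 n G hmeas hindep hgeom k ι hι σ
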